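/- Let S = {1,...,n} be a finite state space, P an irreducible stochastic matrix on S with stationary distribution π* (all entries positive), and Π* the n×n matrix with every row equal to π*. Then for any b : S → ℝ with Σ_i π*(i) b(i) = 0, the equation (P + Π* - I)g = b has a solution g : S → ℝ. -/

import Mathlib

/-!
If `(P + Π* - I) g = 0`, pairing with the stationary distribution `π*` shows `π* ⬝ g = 0`, so
`P g = g`. A `P`-harmonic function attains its maximum at some state `i`; since `g i` is an
average of the values of `g` weighted by the row `i` of `P ^ m`, every state reachable from `i`
also carries the maximum, so irreducibility makes `g` constant, and then `π* ⬝ g = 0` forces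
`g = 0`. A square matrix with trivial kernel is onto.
-/

open Finset

namespace Matrix

variable {R ι : Type*} [Fintype ι] [DecidableEq ι]

theorem pow_mulVec_eq_self_of_mulVec_eq_self [Semiring R] {P : Matrix ι ι R} {g : ι → R}
    (hg : P *ᵥ g = g) (m : ℕ) : (P ^ m) *ᵥ g = g := by
  induction m with
  | zero => exact one_mulVec g
  | succ m ih => rw [pow_succ, ← mulVec_mulVec, hg, ih]

variable [Field R] [LinearOrder R] [IsStrictOrderedRing R] {P : Matrix ι ι R} {g : ι → R}

theorem apply_eq_of_mulVec_eq_self_of_forall_le (hP : P ∈ rowStochastic R ι) (hg : P *ᵥ g = g)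
    {i j : ι} (hmax : ∀ k, g k ≤ g i) (hij : 0 < P i j) : g j = g i := by
  have hgap : ∑ k, P i k * (g i - g k) = 0 := by
    have hgi : ∑ k, P i k * g k = g i := congrFun hg i
    simp only [mul_sub, sum_sub_distrib, ← sum_mul, sum_row_of_mem_rowStochastic hP, one_mul, hgi,
      sub_self]
  have hterm := (sum_eq_zero_iff_of_nonneg fun k _ =>
    mul_nonneg (nonneg_of_mem_rowStochastic hP) (sub_nonneg.mpr (hmax k))).mp hgap j (mem_univ j)
  rcases mul_eq_zero.mp hterm with h | h
  · exact absurd h hij.ne'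
  · linarith

theorem apply_eq_apply_of_mulVec_eq_self (hP : P ∈ rowStochastic R ι)
    (hirr : ∀ i j, ∃ m : ℕ, 0 < (P ^ m) i j) (hg : P *ᵥ g = g) (i j : ι) : g i = g j := by
  have : Nonempty ι := ⟨i⟩
  obtain ⟨i₀, hmax⟩ := Finite.exists_max g
  have hconst : ∀ k, g k = g i₀ := fun k => by
    obtain ⟨m, hm⟩ := hirr i₀ k
    exact apply_eq_of_mulVec_eq_self_of_forall_le (pow_mem hP m)
      (pow_mulVec_eq_self_of_mulVec_eq_self hg m) hmax hm
  rw [hconst i, hconst j]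

/-- `of fun _ j => π j` is `Π*`, the matrix whose rows all equal `π`. -/
theorem mulVec_add_replicateRow_sub_one_injective (hP : P ∈ rowStochastic R ι)
    (hirr : ∀ i j, ∃ m : ℕ, 0 < (P ^ m) i j) {π : ι → R} (hπsum : ∑ i, π i = 1)
    (hstat : π ᵥ* P = π) : Function.Injective (P + of (fun _ j => π j) - 1).mulVec := by
  refine (injective_iff_map_eq_zero (P + of (fun _ j => π j) - 1).mulVecLin).mpr fun g hg => ?_
  change (P + of (fun _ j => π j) - 1) *ᵥ g = 0 at hg
  set c := π ⬝ᵥ g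
  have hfix : ∀ i, (P *ᵥ g) i + c - g i = 0 := fun i => by
    have h := congrFun hg i
    rw [sub_mulVec, add_mulVec, one_mulVec] at h
    exact h
  have hc : c = 0 := by
    have hpair : π ⬝ᵥ (P *ᵥ g) + c * ∑ i, π i - c = 0 := by
      have h := congrArg (π ⬝ᵥ ·) (funext hfix)
      simp only [dotProduct, mul_sub, mul_add, sum_sub_distrib, sum_add_distrib, mul_comm _ c,
        mul_zero, sum_const_zero] at h
      rwa [← mul_sum] at h
    rwa [dotProduct_mulVec, hstat, hπsum, mul_one, add_sub_cancel_right] at hpair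
  have hharm : P *ᵥ g = g := funext fun i => by linarith [hfix i]
  funext j
  have hcj : c = g j := by
    simp only [c, dotProduct, fun i => apply_eq_apply_of_mulVec_eq_self hP hirr hharm i j,
      ← sum_mul, hπsum, one_mul]
  rw [← hcj, hc, Pi.zero_apply]

end Matrix

theorem stmt_11_general (n : ℕ)
    (P : Matrix (Fin n) (Fin n) ℝ)
    (hPnonneg : ∀ i j, 0 ≤ P i j) (hProw : ∀ i, ∑ j, P i j = 1)
    (hirr : ∀ i j : Fin n, ∃ m : ℕ, 1 ≤ m ∧ 0 < (P ^ m) i j)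
    (π : Fin n → ℝ) (hπsum : ∑ i, π i = 1)
    (hstat : Matrix.vecMul π P = π)
    (Pis : Matrix (Fin n) (Fin n) ℝ) (hPis : Pis = Matrix.of fun _ j => π j)
    (b : Fin n → ℝ) :
    ∃ g : Fin n → ℝ, Matrix.mulVec (P + Pis - 1) g = b := by
  have hP : P ∈ Matrix.rowStochastic ℝ (Fin n) :=
    Matrix.mem_rowStochastic_iff_sum.mpr ⟨hPnonneg, hProw⟩
  have hinj := Matrix.mulVec_add_replicateRow_sub_one_injective hP
    (fun i j => (hirr i j).imp fun _ h => h.2) hπsum hstat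
  subst hPis
  exact Matrix.mulVec_surjective_iff_isUnit.mpr (Matrix.mulVec_injective_iff_isUnit.mp hinj) b

theorem stmt_11 (n : ℕ) (hn : 0 < n)
    (P : Matrix (Fin n) (Fin n) ℝ)
    (hPnonneg : ∀ i j, 0 ≤ P i j) (hProw : ∀ i, ∑ j, P i j = 1)
    (hirr : ∀ i j : Fin n, ∃ m : ℕ, 1 ≤ m ∧ 0 < (P ^ m) i j)
    (π : Fin n → ℝ) (hπpos : ∀ i, 0 < π i) (hπsum : ∑ i, π i = 1)
    (hstat : Matrix.vecMul π P = π)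
    (Pis : Matrix (Fin n) (Fin n) ℝ) (hPis : Pis = Matrix.of fun _ j => π j)
    (b : Fin n → ℝ) (hb : ∑ i, π i * b i = 0) :
    ∃ g : Fin n → ℝ, Matrix.mulVec (P + Pis - 1) g = b :=
  stmt_11_general n P hPnonneg hProw hirr π hπsum hstat Pis hPis b
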